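/- arXiv:1810.08316 — 2 statements merged into one kernel-verified Lean document; each statement's English description precedes it below -/
import Mathlib

section
/- Let G ⊆ [m₁]×[m₂] be b-sparse and M ∈ ℝ^{m₁×m₂} with rank(M) = r. Then ‖G(M)‖ ≤ √(b ∧ r) · ‖M‖, and consequently ‖M − G(M)‖ ≤ (√(b ∧ r) + 1)‖M‖. -/
open scoped Matrix.Norms.L2Operator

/-- `restrict G M` is the matrix `M` with all entries outside the index set `G` set to zero. -/
def Matrix.restrict {m₁ m₂ : ℕ} (G : Finset (Fin m₁ × Fin m₂))
    (M : Matrix (Fin m₁) (Fin m₂) ℝ) : Matrix (Fin m₁) (Fin m₂) ℝ :=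
  fun i j => if (i, j) ∈ G then M i j else 0

/-- `G` is `b`-sparse: every row and every column contains at most `b` indices of `G`. -/
def Matrix.BSparse {m₁ m₂ : ℕ} (G : Finset (Fin m₁ × Fin m₂)) (b : ℕ) : Prop :=
  (∀ i : Fin m₁, (G.filter (fun q => q.1 = i)).card ≤ b) ∧
  (∀ j : Fin m₂, (G.filter (fun q => q.2 = j)).card ≤ b)


/-! The restriction `G(M)` only deletes entries, so its Frobenius norm is at most that of `M`,
which is at most `√(rank M) ‖M‖` because the squared singular values of `M` are at most
`‖M‖²` and only `rank M` of them are nonzero; the operator norm is bounded by the Frobenius norm.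
For the `√b` bound, Cauchy–Schwarz over the at most `b` entries of row `i` of `G(M)` gives
`((G(M) x) i)² ≤ b ∑ⱼ (M i j x j)²`, and summing over `i` leaves `b ∑ⱼ x j² ‖M eⱼ‖² ≤ b ‖M‖² ‖x‖²`. -/

open scoped Matrix
open Finset

namespace Matrix

section L2OpNorm

variable {m n : Type*} [Fintype m] [Fintype n]

lemma trace_transpose_mul_self (A : Matrix m n ℝ) : (Aᵀ * A).trace = ∑ i, ∑ j, A i j ^ 2 := by
  simp only [trace, diag_apply, mul_apply, transpose_apply, sq]
  exact sum_comm

variable [DecidableEq n]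

lemma l2_opNorm_le_of_sum_sq_mulVec_le (A : Matrix m n ℝ) {C : ℝ} (hC : 0 ≤ C)
    (h : ∀ x : n → ℝ, ∑ i, (A *ᵥ x) i ^ 2 ≤ C ^ 2 * ∑ j, x j ^ 2) : ‖A‖ ≤ C := by
  rw [l2_opNorm_def]
  refine ContinuousLinearMap.opNorm_le_bound _ hC fun x => ?_
  refine (pow_le_pow_iff_left₀ (norm_nonneg _) (by positivity) two_ne_zero).mp ?_
  simpa [EuclideanSpace.real_norm_sq_eq, mul_pow] using h x

lemma sum_sq_apply_le_l2_opNorm_sq (A : Matrix m n ℝ) (j : n) : ∑ i, A i j ^ 2 ≤ ‖A‖ ^ 2 := by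
  have h := A.l2_opNorm_mulVec (EuclideanSpace.single j 1)
  rw [PiLp.norm_single, norm_one, mul_one] at h
  simpa [EuclideanSpace.real_norm_sq_eq, mulVec_single_one] using
    pow_le_pow_left₀ (norm_nonneg _) h 2

lemma sum_sum_sq_mul_le_l2_opNorm_sq_mul (A : Matrix m n ℝ) (x : n → ℝ) :
    ∑ i, ∑ j, (A i j * x j) ^ 2 ≤ ‖A‖ ^ 2 * ∑ j, x j ^ 2 := by
  simp_rw [mul_pow, sum_comm (γ := m), ← sum_mul, mul_sum]
  exact sum_le_sum fun j _ =>
    mul_le_mul_of_nonneg_right (A.sum_sq_apply_le_l2_opNorm_sq j) (sq_nonneg _)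

lemma l2_opNorm_le_sqrt_sum_sq (A : Matrix m n ℝ) : ‖A‖ ≤ √(∑ i, ∑ j, A i j ^ 2) := by
  refine A.l2_opNorm_le_of_sum_sq_mulVec_le (Real.sqrt_nonneg _) fun x => ?_
  rw [Real.sq_sqrt (by positivity), sum_mul]
  exact sum_le_sum fun i _ => sum_mul_sq_le_sq_mul_sq _ _ _

lemma IsHermitian.eigenvalues_le_l2_opNorm {A : Matrix n n ℝ} (hA : A.IsHermitian) (k : n) :
    hA.eigenvalues k ≤ ‖A‖ := by
  have : Nonempty n := ⟨k⟩
  exact (le_abs_self _).trans <| spectrum.norm_le_norm_of_mem <|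
    hA.spectrum_real_eq_range_eigenvalues ▸ Set.mem_range_self k

lemma sum_sq_le_rank_mul_l2_opNorm_sq (A : Matrix m n ℝ) :
    ∑ i, ∑ j, A i j ^ 2 ≤ A.rank * ‖A‖ ^ 2 := by
  have hAA : (Aᵀ * A).IsHermitian := by simpa using isHermitian_conjTranspose_mul_self A
  calc ∑ i, ∑ j, A i j ^ 2 = ∑ k, hAA.eigenvalues k := by
        rw [← trace_transpose_mul_self, hAA.trace_eq_sum_eigenvalues]; simp
    _ = ∑ k with hAA.eigenvalues k ≠ 0, hAA.eigenvalues k := (sum_filter_ne_zero _).symm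
    _ ≤ #{k | hAA.eigenvalues k ≠ 0} • ‖Aᵀ * A‖ :=
        sum_le_card_nsmul _ _ _ fun k _ => hAA.eigenvalues_le_l2_opNorm k
    _ = A.rank * ‖A‖ ^ 2 := by
        rw [← Fintype.card_subtype, ← hAA.rank_eq_card_non_zero_eigs, rank_transpose_mul_self,
          nsmul_eq_mul, ← conjTranspose_eq_transpose_of_trivial,
          l2_opNorm_conjTranspose_mul_self, sq]

lemma l2_opNorm_le_sqrt_rank_mul_of_sum_sq_le {A B : Matrix m n ℝ}
    (h : ∑ i, ∑ j, A i j ^ 2 ≤ ∑ i, ∑ j, B i j ^ 2) : ‖A‖ ≤ √B.rank * ‖B‖ :=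
  calc ‖A‖ ≤ √(∑ i, ∑ j, A i j ^ 2) := A.l2_opNorm_le_sqrt_sum_sq
    _ ≤ √(B.rank * ‖B‖ ^ 2) := Real.sqrt_le_sqrt (h.trans B.sum_sq_le_rank_mul_l2_opNorm_sq)
    _ = √B.rank * ‖B‖ := by rw [Real.sqrt_mul (Nat.cast_nonneg _), Real.sqrt_sq (norm_nonneg _)]

end L2OpNorm

section Restrict

variable {m₁ m₂ : ℕ} (G : Finset (Fin m₁ × Fin m₂)) (M : Matrix (Fin m₁) (Fin m₂) ℝ)

lemma sum_sq_restrict_le : ∑ i, ∑ j, restrict G M i j ^ 2 ≤ ∑ i, ∑ j, M i j ^ 2 :=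
  sum_le_sum fun i _ => sum_le_sum fun j _ => by
    unfold restrict; split_ifs <;> simp [sq_nonneg]

lemma restrict_mulVec_apply (x : Fin m₂ → ℝ) (i : Fin m₁) :
    (restrict G M *ᵥ x) i = ∑ j with (i, j) ∈ G, M i j * x j := by
  simp [mulVec, dotProduct, restrict, sum_filter, ite_mul]

lemma sq_restrict_mulVec_apply_le (x : Fin m₂ → ℝ) (i : Fin m₁) :
    (restrict G M *ᵥ x) i ^ 2 ≤ #{q ∈ G | q.1 = i} * ∑ j, (M i j * x j) ^ 2 := by
  have hcard : #{j | (i, j) ∈ G} ≤ #{q ∈ G | q.1 = i} :=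
    card_le_card_of_injOn (fun j => (i, j)) (fun j hj => by simpa using hj)
      (fun _ _ _ _ h => (Prod.mk.inj h).2)
  rw [restrict_mulVec_apply]
  calc (∑ j with (i, j) ∈ G, M i j * x j) ^ 2
      ≤ #{j | (i, j) ∈ G} * ∑ j with (i, j) ∈ G, (M i j * x j) ^ 2 := by
        exact sq_sum_le_card_mul_sum_sq
    _ ≤ #{q ∈ G | q.1 = i} * ∑ j, (M i j * x j) ^ 2 := by
        gcongr
        exact filter_subset _ _

lemma restrict_l2OpNorm_le_sqrt_mul_of_card_row_le {b : ℕ}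
    (hrow : ∀ i, #{q ∈ G | q.1 = i} ≤ b) : ‖restrict G M‖ ≤ √b * ‖M‖ := by
  refine (restrict G M).l2_opNorm_le_of_sum_sq_mulVec_le (by positivity) fun x => ?_
  calc ∑ i, (restrict G M *ᵥ x) i ^ 2 ≤ ∑ i, b * ∑ j, (M i j * x j) ^ 2 :=
        sum_le_sum fun i _ => (sq_restrict_mulVec_apply_le G M x i).trans <| by
          gcongr; exact_mod_cast hrow i
    _ ≤ b * (‖M‖ ^ 2 * ∑ j, x j ^ 2) := by
        rw [← mul_sum]; gcongr; exact M.sum_sum_sq_mul_le_l2_opNorm_sq_mul x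
    _ = (√b * ‖M‖) ^ 2 * ∑ j, x j ^ 2 := by
        rw [mul_pow, Real.sq_sqrt (Nat.cast_nonneg _), mul_assoc]

end Restrict

end Matrix

/-- If `G` is `b`-sparse and `rank(M) = r`, then `‖G(M)‖ ≤ √(b ∧ r) ‖M‖`,
and consequently `‖M − G(M)‖ ≤ (√(b ∧ r) + 1) ‖M‖`. -/
theorem restrict_l2OpNorm_le_sqrt_min_rank {m₁ m₂ b r : ℕ}
    (G : Finset (Fin m₁ × Fin m₂)) (hG : Matrix.BSparse G b)
    (M : Matrix (Fin m₁) (Fin m₂) ℝ) (hrank : M.rank = r) :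
    ‖Matrix.restrict G M‖ ≤ Real.sqrt (min b r) * ‖M‖ ∧
    ‖M - Matrix.restrict G M‖ ≤ (Real.sqrt (min b r) + 1) * ‖M‖ := by
  have hmin : ‖Matrix.restrict G M‖ ≤ Real.sqrt (min b r) * ‖M‖ := by
    rcases le_total b r with hbr | hrb
    · rw [min_eq_left (Nat.cast_le.mpr hbr)]
      exact Matrix.restrict_l2OpNorm_le_sqrt_mul_of_card_row_le G M hG.1
    · rw [min_eq_right (Nat.cast_le.mpr hrb), ← hrank]
      exact Matrix.l2_opNorm_le_sqrt_rank_mul_of_sum_sq_le (Matrix.sum_sq_restrict_le G M)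
  refine ⟨hmin, ?_⟩
  calc ‖M - Matrix.restrict G M‖ ≤ ‖M‖ + ‖Matrix.restrict G M‖ := norm_sub_le _ _
    _ ≤ (Real.sqrt (min b r) + 1) * ‖M‖ := by linarith
end

section
/- Let U ∈ ℝ^{m₁×r} and V ∈ ℝ^{m₂×r} have orthonormal columns, and let G ⊆ [m₁]×[m₂] be b-sparse. Then for any A ∈ ℝ^{m₁×m₂}, ‖G(P_U A P_V)‖ ≤ ( √(I(U)I(V)) · r · b / √(m₁ m₂) ) · ‖A‖, where P_U = UU^⊤, P_V = VV^⊤, I(U) = (m₁/r)max_i‖e_i^⊤U‖₂², I(V) = (m₂/r)max_j‖e_j^⊤V‖₂². -/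
/-!
Write `U Uᵀ A V Vᵀ = U M Vᵀ` with `M = Uᵀ A V`; orthonormality of the columns gives `‖M‖ ≤ ‖A‖`,
and Cauchy–Schwarz bounds the `(i, j)` entry by `‖Uᵢ‖ ‖M‖ ‖Vⱼ‖`, where the row norms are controlled
by the incoherence: `‖Uᵢ‖² ≤ I(U) r / m₁`. Restricting to a `b`-sparse set then leaves absolute
row and column sums of at most `b` times this entry bound, and the Schur test turns that into
the same bound on the spectral norm.
-/

open scoped Matrix.Norms.L2Operator
open Matrix

/-- The incoherence constant `I(U) = (m/r) maxᵢ ‖eᵢᵀ U‖₂²` of a matrix `U ∈ ℝ^{m×r}`. -/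
noncomputable def Matrix.incoh {m r : ℕ} (U : Matrix (Fin m) (Fin r) ℝ) : ℝ :=
  ((m : ℝ) / r) * ⨆ i : Fin m, ∑ k, (U i k) ^ 2

open Finset WithLp

namespace Matrix

section L2OpNorm

variable {k l m n : Type*} [Fintype k] [Fintype l]

theorem l2_opNorm_le_sqrt_mul_of_sum_abs_le [DecidableEq l] (A : Matrix k l ℝ) {R C : ℝ}
    (hR : 0 ≤ R) (hrow : ∀ i, ∑ j, |A i j| ≤ R) (hcol : ∀ j, ∑ i, |A i j| ≤ C) :
    ‖A‖ ≤ √(R * C) := by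
  have hrow_sq (x : l → ℝ) (i : k) : (A *ᵥ x) i ^ 2 ≤ R * ∑ j, |A i j| * x j ^ 2 :=
    calc (A *ᵥ x) i ^ 2 ≤ (∑ j, |A i j * x j|) ^ 2 :=
          sq_le_sq.mpr ((abs_sum_le_sum_abs _ _).trans (le_abs_self _))
      _ ≤ (∑ j, |A i j|) * ∑ j, |A i j| * x j ^ 2 :=
          sum_sq_le_sum_mul_sum_of_sq_le_mul _ (fun _ _ => abs_nonneg _)
            (fun _ _ => by positivity)
            (fun j _ => le_of_eq (by rw [abs_mul, mul_pow, sq_abs (x j)]; ring))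
      _ ≤ R * ∑ j, |A i j| * x j ^ 2 := by gcongr; exact hrow i
  rw [l2_opNorm_def]
  refine ContinuousLinearMap.opNorm_le_bound _ (Real.sqrt_nonneg _) fun x => ?_
  change ‖toLp 2 (A *ᵥ ofLp x)‖ ≤ _
  set y := toLp 2 (A *ᵥ ofLp x)
  have hy : ‖y‖ ^ 2 ≤ R * C * ‖x‖ ^ 2 := by
    rw [EuclideanSpace.real_norm_sq_eq, EuclideanSpace.real_norm_sq_eq]
    calc ∑ i, y i ^ 2 ≤ ∑ i, R * ∑ j, |A i j| * x j ^ 2 := sum_le_sum fun i _ => hrow_sq x i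
      _ = R * ∑ j, (∑ i, |A i j|) * x j ^ 2 := by
        rw [← mul_sum, sum_comm]; simp_rw [sum_mul]
      _ ≤ R * ∑ j, C * x j ^ 2 := by gcongr with j; exact hcol j
      _ = R * C * ∑ j, x j ^ 2 := by rw [← mul_sum]; ring
  calc ‖y‖ = √(‖y‖ ^ 2) := (Real.sqrt_sq (norm_nonneg _)).symm
    _ ≤ √(R * C * ‖x‖ ^ 2) := Real.sqrt_le_sqrt hy
    _ = √(R * C) * ‖x‖ := by rw [Real.sqrt_mul' _ (sq_nonneg _), Real.sqrt_sq (norm_nonneg _)]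

theorem l2_opNorm_le_one_of_transpose_mul_self_eq_one [DecidableEq l] {U : Matrix k l ℝ}
    (hU : Uᵀ * U = 1) : ‖U‖ ≤ 1 := by
  have h : ‖U‖ * ‖U‖ ≤ 1 := by
    rw [← l2_opNorm_conjTranspose_mul_self, conjTranspose_eq_transpose_of_trivial, hU,
      ← diagonal_one, l2_opNorm_diagonal]
    exact pi_norm_le_iff_of_nonneg zero_le_one |>.mpr fun _ => by simp
  nlinarith [norm_nonneg U]

theorem l2_opNorm_transpose_mul_mul_le [Fintype m] [Fintype n] [DecidableEq k] [DecidableEq l]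
    [DecidableEq m] [DecidableEq n] {U : Matrix k m ℝ} {V : Matrix l n ℝ} (hU : Uᵀ * U = 1)
    (hV : Vᵀ * V = 1) (A : Matrix k l ℝ) : ‖Uᵀ * A * V‖ ≤ ‖A‖ := by
  have hUt : ‖Uᵀ‖ ≤ 1 := by
    rw [← conjTranspose_eq_transpose_of_trivial, l2_opNorm_conjTranspose]
    exact l2_opNorm_le_one_of_transpose_mul_self_eq_one hU
  calc ‖Uᵀ * A * V‖ ≤ ‖Uᵀ‖ * ‖A‖ * ‖V‖ :=
        (l2_opNorm_mul _ _).trans (by gcongr; exact l2_opNorm_mul _ _)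
    _ ≤ 1 * ‖A‖ * 1 := by gcongr; exact l2_opNorm_le_one_of_transpose_mul_self_eq_one hV
    _ = ‖A‖ := by ring

theorem abs_mul_mul_transpose_apply_le [DecidableEq l] (U : Matrix m k ℝ) (M : Matrix k l ℝ)
    (V : Matrix n l ℝ) (i : m) (j : n) :
    |(U * M * Vᵀ) i j| ≤ ‖toLp 2 (U i)‖ * ‖M‖ * ‖toLp 2 (V j)‖ := by
  have h : (U * M * Vᵀ) i j = inner ℝ (toLp 2 (U i)) (toLp 2 (M *ᵥ V j)) := by
    rw [Matrix.mul_assoc, mul_apply', EuclideanSpace.inner_toLp_toLp, dotProduct_comm]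
    rfl
  rw [h, mul_assoc]
  calc _ ≤ ‖toLp 2 (U i)‖ * ‖toLp 2 (M *ᵥ V j)‖ := abs_real_inner_le_norm _ _
    _ ≤ _ := by gcongr; exact l2_opNorm_mulVec M _

end L2OpNorm

theorem incoh_nonneg {m r : ℕ} (U : Matrix (Fin m) (Fin r) ℝ) : 0 ≤ incoh U :=
  mul_nonneg (by positivity) (Real.iSup_nonneg fun (i : Fin m) => by positivity)

theorem norm_row_le_sqrt_incoh {m r : ℕ} (U : Matrix (Fin m) (Fin r) ℝ) (i : Fin m) :
    ‖toLp 2 (U i)‖ ≤ √(incoh U * r / m) := by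
  rw [EuclideanSpace.norm_eq]
  refine Real.sqrt_le_sqrt ?_
  simp only [Real.norm_eq_abs, sq_abs]
  rcases r.eq_zero_or_pos with rfl | hr
  · simp
  have hm : (m : ℝ) ≠ 0 := by exact_mod_cast i.pos.ne'
  rw [incoh, show (m : ℝ) / r * (⨆ i, ∑ k, U i k ^ 2) * r / m = ⨆ i, ∑ k, U i k ^ 2 by
    field_simp]
  exact le_ciSup (f := fun i => ∑ k, U i k ^ 2) (Set.finite_range _).bddAbove i

theorem BSparse.card_row_le {m₁ m₂ b : ℕ} {G : Finset (Fin m₁ × Fin m₂)} (hG : BSparse G b)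
    (i : Fin m₁) : #{j | (i, j) ∈ G} ≤ b :=
  (hG.1 i).trans' <| card_le_card_of_injOn (fun j => (i, j))
    (fun j hj => by simp_all) (fun _ _ _ _ h => (Prod.ext_iff.mp h).2)

theorem BSparse.card_col_le {m₁ m₂ b : ℕ} {G : Finset (Fin m₁ × Fin m₂)} (hG : BSparse G b)
    (j : Fin m₂) : #{i | (i, j) ∈ G} ≤ b :=
  (hG.2 j).trans' <| card_le_card_of_injOn (fun i => (i, j))
    (fun i hi => by simp_all) (fun _ _ _ _ h => (Prod.ext_iff.mp h).1)

theorem l2_opNorm_restrict_le {m₁ m₂ b : ℕ} {G : Finset (Fin m₁ × Fin m₂)} (hG : BSparse G b)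
    {M : Matrix (Fin m₁) (Fin m₂) ℝ} {c : ℝ} (hc : 0 ≤ c) (hM : ∀ i j, |M i j| ≤ c) :
    ‖restrict G M‖ ≤ b * c := by
  have hrow (i : Fin m₁) : ∑ j, |restrict G M i j| ≤ b * c :=
    calc ∑ j, |restrict G M i j| = ∑ j with (i, j) ∈ G, |M i j| := by
          simp only [restrict, apply_ite, abs_zero, sum_ite, sum_const_zero, add_zero]
      _ ≤ #{j | (i, j) ∈ G} • c := sum_le_card_nsmul _ _ _ fun j _ => hM i j
      _ ≤ b * c := by rw [nsmul_eq_mul]; gcongr; exact_mod_cast hG.card_row_le i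
  have hcol (j : Fin m₂) : ∑ i, |restrict G M i j| ≤ b * c :=
    calc ∑ i, |restrict G M i j| = ∑ i with (i, j) ∈ G, |M i j| := by
          simp only [restrict, apply_ite, abs_zero, sum_ite, sum_const_zero, add_zero]
      _ ≤ #{i | (i, j) ∈ G} • c := sum_le_card_nsmul _ _ _ fun i _ => hM i j
      _ ≤ b * c := by rw [nsmul_eq_mul]; gcongr; exact_mod_cast hG.card_col_le j
  simpa [Real.sqrt_mul_self (by positivity : (0 : ℝ) ≤ b * c)] using
    l2_opNorm_le_sqrt_mul_of_sum_abs_le _ (by positivity) hrow hcol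

end Matrix

/-- If `U ∈ 𝕆_{m₁,r}` and `V ∈ 𝕆_{m₂,r}` have orthonormal columns and `G` is `b`-sparse,
then for every `A`, `‖G(P_U A P_V)‖ ≤ (√(I(U)I(V))·r·b/√(m₁m₂)) ‖A‖`,
where `P_U = UUᵀ` and `P_V = VVᵀ`. -/
theorem restrict_two_sided_proj_l2OpNorm_le {m₁ m₂ r b : ℕ}
    (U : Matrix (Fin m₁) (Fin r) ℝ) (hU : Uᵀ * U = 1)
    (V : Matrix (Fin m₂) (Fin r) ℝ) (hV : Vᵀ * V = 1)
    (G : Finset (Fin m₁ × Fin m₂)) (hG : Matrix.BSparse G b)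
    (A : Matrix (Fin m₁) (Fin m₂) ℝ) :
    ‖Matrix.restrict G (U * Uᵀ * A * (V * Vᵀ))‖ ≤
      Real.sqrt (Matrix.incoh U * Matrix.incoh V) * r * b / Real.sqrt (m₁ * m₂) * ‖A‖ := by
  have hentry (i j) : |(U * Uᵀ * A * (V * Vᵀ)) i j| ≤
      √(incoh U * r / m₁) * ‖A‖ * √(incoh V * r / m₂) := by
    rw [show U * Uᵀ * A * (V * Vᵀ) = U * (Uᵀ * A * V) * Vᵀ by simp only [Matrix.mul_assoc]]
    grw [abs_mul_mul_transpose_apply_le, norm_row_le_sqrt_incoh, norm_row_le_sqrt_incoh,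
      l2_opNorm_transpose_mul_mul_le hU hV]
  have hsqrt : √(incoh U * r / m₁) * √(incoh V * r / m₂) =
      √(incoh U * incoh V) * r / √(m₁ * m₂) := by
    have hIU := incoh_nonneg U
    have hIV := incoh_nonneg V
    calc √(incoh U * r / m₁) * √(incoh V * r / m₂)
        = √(incoh U * incoh V * r ^ 2 / (m₁ * m₂)) := by
          rw [← Real.sqrt_mul (by positivity)]; congr 1; ring
      _ = √(incoh U * incoh V) * r / √(m₁ * m₂) := by
          rw [Real.sqrt_div' _ (by positivity), Real.sqrt_mul (by positivity),
            Real.sqrt_sq (by positivity)]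
  grw [l2_opNorm_restrict_le hG (by positivity) hentry]
  linear_combination (b * ‖A‖) * hsqrt
end
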